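/- arXiv:2602.05241 — 3 statements merged into one kernel-verified Lean document; each statement's English description precedes it below -/
import Mathlib

section
/- Let A > 0, B ∈ ℝ, e ∈ ℝ. Define Z₁(w₁) = −A/2 + √A·w₁ and Z₂(w₁,w₂) = −B + (B/√A)·w₁ + e·w₂. Then the integral of (w₁, w₂) ↦ 1_{{Z₁(w₁) < 0}}·exp(Z₁(w₁))·Z₂(w₁,w₂) with respect to the product of two standard Gaussian measures on ℝ² equals −(B/√A)·φ(√A/2). (Exponentially tilted Gaussian computation of E[1_{{Z₁<0}} e^{Z₁} Z₂] for the bivariate Gaussian vector with mean (−A/2, −B) and Cov(Z₁,Z₂) = B, Var Z₁ = A, used in the proof of Theorem 4 of the paper.) -/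
/-!
With `s = √A`, tilting the standard normal density by `exp (s x - s² / 2)` shifts it:
`φ x * exp (s x - s² / 2) = φ (x - s)`. The term `e w₂` has mean zero by independence of the
coordinates, and `-B + (B / s) w₁ = (B / s) (w₁ - s)`, so the integral reduces to
`(B / s) ∫_{x < s/2} (x - s) φ (x - s) dx = -(B / s) φ (s / 2 - s)`, because `-φ` is an
antiderivative of `x φ x` vanishing at `-∞`.
-/

open MeasureTheory ProbabilityTheory Real Set

/-- Standard normal density. -/
noncomputable def stdPhi (x : ℝ) : ℝ := Real.exp (-x ^ 2 / 2) / Real.sqrt (2 * Real.pi)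

lemma gaussianPDFReal_zero_one : gaussianPDFReal 0 1 = stdPhi := by
  ext x
  simp [gaussianPDFReal, stdPhi, div_eq_inv_mul]

lemma stdPhi_neg (x : ℝ) : stdPhi (-x) = stdPhi x := by
  simp [stdPhi]

lemma integrable_stdPhi : Integrable stdPhi :=
  gaussianPDFReal_zero_one ▸ integrable_gaussianPDFReal 0 1

lemma integrable_mul_stdPhi : Integrable fun x => x * stdPhi x := by
  refine ((integrable_mul_exp_neg_mul_sq one_half_pos).div_const √(2 * π)).congr
    (ae_of_all _ fun x => ?_)
  unfold stdPhi
  ring_nf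

lemma hasDerivAt_stdPhi (x : ℝ) : HasDerivAt stdPhi (-x * stdPhi x) x := by
  have h : HasDerivAt (fun y : ℝ => -y ^ 2 / 2) (-x) x := by
    simpa [neg_div] using ((hasDerivAt_pow 2 x).div_const 2).fun_neg
  exact (h.exp.div_const √(2 * π)).congr_deriv (by unfold stdPhi; ring)

lemma integral_Iic_sub_mul_stdPhi_sub (a m : ℝ) :
    ∫ x in Iic a, (x - m) * stdPhi (x - m) = -stdPhi (a - m) := by
  have hderiv : ∀ x ∈ Iic a,
      HasDerivAt (fun y => -stdPhi (y - m)) ((x - m) * stdPhi (x - m)) x := fun x _ =>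
    ((hasDerivAt_stdPhi (x - m)).comp_sub_const x m).fun_neg.congr_deriv (by ring)
  have hint := (integrable_mul_stdPhi.comp_sub_right m).integrableOn (s := Iic a)
  have hlim := tendsto_zero_of_hasDerivAt_of_integrableOn_Iic hderiv hint
    (integrable_stdPhi.comp_sub_right m).neg.integrableOn
  rw [integral_Iic_of_hasDerivAt_of_tendsto' hderiv hint hlim, sub_zero]

lemma integral_gaussianReal_zero_one (f : ℝ → ℝ) :
    ∫ x, f x ∂gaussianReal 0 1 = ∫ x, stdPhi x * f x := by
  rw [integral_gaussianReal_eq_integral_smul one_ne_zero, gaussianPDFReal_zero_one]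
  rfl

lemma integrable_gaussianReal_zero_one_iff {f : ℝ → ℝ} :
    Integrable f (gaussianReal 0 1) ↔ Integrable fun x => stdPhi x * f x := by
  rw [gaussianReal_of_var_ne_zero 0 one_ne_zero, gaussianPDF_def,
    integrable_withDensity_iff_integrable_smul' (by fun_prop)
      (ae_of_all _ fun _ => ENNReal.ofReal_lt_top)]
  simp_rw [ENNReal.toReal_ofReal (gaussianPDFReal_nonneg 0 1 _), gaussianPDFReal_zero_one,
    smul_eq_mul]

lemma stdPhi_mul_exp (s x : ℝ) : stdPhi x * exp (-s ^ 2 / 2 + s * x) = stdPhi (x - s) := by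
  simp only [stdPhi, div_mul_eq_mul_div, ← exp_add]
  ring_nf

lemma integrable_exp_tilt_gaussianReal (s : ℝ) :
    Integrable (fun x => exp (-s ^ 2 / 2 + s * x)) (gaussianReal 0 1) := by
  simpa [integrable_gaussianReal_zero_one_iff, stdPhi_mul_exp]
    using integrable_stdPhi.comp_sub_right s

lemma integrable_exp_tilt_mul_sub_gaussianReal (s : ℝ) :
    Integrable (fun x => exp (-s ^ 2 / 2 + s * x) * (x - s)) (gaussianReal 0 1) := by
  simp_rw [integrable_gaussianReal_zero_one_iff, ← mul_assoc, stdPhi_mul_exp, mul_comm _ (_ - s)]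
  exact integrable_mul_stdPhi.comp_sub_right s

lemma integral_gaussianReal_indicator_Iio_exp_tilt_mul_sub (a s : ℝ) :
    ∫ x, (Iio a).indicator (fun x => exp (-s ^ 2 / 2 + s * x) * (x - s)) x ∂gaussianReal 0 1
      = -stdPhi (a - s) := by
  simp_rw [integral_gaussianReal_zero_one, ← indicator_mul_right, ← mul_assoc, stdPhi_mul_exp]
  rw [integral_indicator measurableSet_Iio, ← integral_Iic_eq_integral_Iio,
    ← integral_Iic_sub_mul_stdPhi_sub]
  simp_rw [mul_comm]

lemma integral_prod_add_mul_snd {α : Type*} [MeasurableSpace α] {μ : Measure α} {ν : Measure ℝ}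
    [SFinite μ] [IsProbabilityMeasure ν] {f g : α → ℝ} (hf : Integrable f μ)
    (hg : Integrable g μ) (hν : Integrable (fun y => y) ν) :
    ∫ w, f w.1 + g w.1 * w.2 ∂μ.prod ν = ∫ x, f x ∂μ + (∫ x, g x ∂μ) * ∫ y, y ∂ν := by
  rw [integral_add (hf.comp_fst ν) (hg.mul_prod hν), integral_fun_fst,
    integral_prod_mul g (fun y => y), probReal_univ, one_smul]

/-- Exponentially tilted Gaussian computation: for the bivariate Gaussian vector
`Z₁ = -A/2 + √A w₁`, `Z₂ = -B + (B/√A) w₁ + e w₂` (mean `(-A/2, -B)`, `Var Z₁ = A`,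
`Cov(Z₁,Z₂) = B`), one has `E[1_{Z₁<0} e^{Z₁} Z₂] = -(B/√A) φ(√A/2)`. -/
theorem tilted_gaussian_half_space_mean (A B e : ℝ) (hA : 0 < A) :
    ∫ w : ℝ × ℝ, ({w : ℝ × ℝ | -A / 2 + Real.sqrt A * w.1 < 0}.indicator
        (fun w => Real.exp (-A / 2 + Real.sqrt A * w.1) *
          (-B + B / Real.sqrt A * w.1 + e * w.2)) w)
      ∂((gaussianReal 0 1).prod (gaussianReal 0 1))
      = -(B / Real.sqrt A) * stdPhi (Real.sqrt A / 2) := by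
  obtain ⟨s, hs, rfl⟩ : ∃ s, 0 < s ∧ A = s ^ 2 := ⟨√A, sqrt_pos.2 hA, (sq_sqrt hA.le).symm⟩
  rw [sqrt_sq hs.le]
  have hsplit : ∀ w : ℝ × ℝ,
      {w : ℝ × ℝ | -s ^ 2 / 2 + s * w.1 < 0}.indicator
        (fun w => exp (-s ^ 2 / 2 + s * w.1) * (-B + B / s * w.1 + e * w.2)) w
      = B / s * (Iio (s / 2)).indicator (fun x => exp (-s ^ 2 / 2 + s * x) * (x - s)) w.1
        + e * (Iio (s / 2)).indicator (fun x => exp (-s ^ 2 / 2 + s * x)) w.1 * w.2 := by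
    intro w
    have hiff : -s ^ 2 / 2 + s * w.1 < 0 ↔ w.1 < s / 2 := by
      constructor <;> intro h <;> nlinarith
    by_cases h : w.1 < s / 2
    · simp only [indicator_apply, mem_ofPred_eq, mem_Iio, hiff, h, if_true]
      field_simp
      ring
    · simp [hiff, h]
  rw [integral_congr_ae (ae_of_all _ hsplit), integral_prod_add_mul_snd
      ((integrable_exp_tilt_mul_sub_gaussianReal s).indicator measurableSet_Iio |>.const_mul _)
      ((integrable_exp_tilt_gaussianReal s).indicator measurableSet_Iio |>.const_mul _)
      ((memLp_id_gaussianReal 1).integrable le_rfl)]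
  rw [integral_const_mul, integral_gaussianReal_indicator_Iio_exp_tilt_mul_sub,
    integral_id_gaussianReal, mul_zero, add_zero, show s / 2 - s = -(s / 2) by ring, stdPhi_neg]
  ring
end

section
/- Let X be a nonnegative integrable random variable, let s > 0, and let Σ : (0,∞) → (0,∞) be a function that is differentiable at K = s and satisfies E[(K − X)_+] = p_K(s, Σ(K)) for all K in a neighborhood of s. Assume moreover that K ↦ E[(K − X)_+] is differentiable at K = s with derivative P[X < s]. Then Σ′(s) = (2√(Σ(s)) / (s·φ(√(Σ(s))/2))) · (P[X < s] − Φ(√(Σ(s))/2)). (Static version of the at-the-money skew formula, equation (2.2) of the paper.) -/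
open MeasureTheory ProbabilityTheory Real Set

/-- Standard normal cumulative distribution function. -/
noncomputable def stdCDF (x : ℝ) : ℝ := ∫ y in Set.Iic x, stdPhi y

/-- `d₊(s,t)` in the Black–Scholes formula, with strike `K`. -/
noncomputable def dPlus (s K t : ℝ) : ℝ := (Real.log (s / K) + t / 2) / Real.sqrt t

/-- `d₋(s,t)` in the Black–Scholes formula, with strike `K`. -/
noncomputable def dMinus (s K t : ℝ) : ℝ := (Real.log (s / K) - t / 2) / Real.sqrt t

/-- Black–Scholes put price `p_K(s,t)`. -/
noncomputable def putBS (K s t : ℝ) : ℝ :=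
  K * stdCDF (-dMinus s K t) - s * stdCDF (-dPlus s K t)

/-!
Differentiate the implied relation `E[(K - X)₊] = p_K(s, Σ(K))` in `K`. Along any differentiable
variance curve, the Black–Scholes identity `K φ(d₋) = s φ(d₊)` together with `d₊ - d₋ = √Σ(K)`
makes the terms involving `d₋'` cancel, leaving
`d/dK p_K(s, Σ(K)) = Φ(-d₋) + s φ(d₊) · (√Σ)'`.
At the money `d_± = ±√Σ(s)/2`, so `P[X < s] = Φ(√Σ(s)/2) + s φ(√Σ(s)/2) Σ'(s) / (2√Σ(s))`,
which is solved for `Σ'(s)`.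
-/

lemma continuous_stdPhi : Continuous stdPhi := by
  unfold stdPhi; fun_prop

lemma stdPhi_pos (x : ℝ) : 0 < stdPhi x := by
  unfold stdPhi; positivity

lemma hasDerivAt_stdCDF (x : ℝ) : HasDerivAt stdCDF (stdPhi x) x := by
  have hint := integrable_stdPhi
  have hsplit : stdCDF = fun y => stdCDF 0 + ∫ t in (0 : ℝ)..y, stdPhi t := by
    funext y
    have := intervalIntegral.integral_Iic_sub_Iic hint.integrableOn hint.integrableOn
      (a := 0) (b := y)
    rw [stdCDF, stdCDF]
    linarith
  rw [hsplit]
  exact (intervalIntegral.integral_hasDerivAt_right hint.intervalIntegrable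
    hint.aestronglyMeasurable.stronglyMeasurableAtFilter
    continuous_stdPhi.continuousAt).const_add _

lemma dPlus_sub_dMinus (s K t : ℝ) : dPlus s K t - dMinus s K t = √t := by
  rw [dPlus, dMinus, ← sub_div, add_sub_sub_cancel, add_halves, div_sqrt]

lemma dPlus_self (s t : ℝ) : dPlus s s t = √t / 2 := by
  rw [dPlus, log_div_self, zero_add, div_right_comm, div_sqrt]

lemma dMinus_self (s t : ℝ) : dMinus s s t = -(√t / 2) := by
  rw [dMinus, log_div_self, zero_sub, neg_div, div_right_comm, div_sqrt]

lemma dPlus_sq_sub_dMinus_sq {s K t : ℝ} (ht : 0 < t) :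
    dPlus s K t ^ 2 - dMinus s K t ^ 2 = 2 * log (s / K) := by
  rw [dPlus, dMinus, div_pow, div_pow, sq_sqrt ht.le]
  field_simp
  ring

lemma mul_stdPhi_dMinus {s K t : ℝ} (hs : 0 < s) (hK : 0 < K) (ht : 0 < t) :
    K * stdPhi (dMinus s K t) = s * stdPhi (dPlus s K t) := by
  have hexp : exp (-dMinus s K t ^ 2 / 2) = exp (-dPlus s K t ^ 2 / 2) * (s / K) := by
    rw [← exp_log (div_pos hs hK), ← exp_add]
    congr 1
    linarith [dPlus_sq_sub_dMinus_sq (s := s) (K := K) ht]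
  rw [stdPhi, stdPhi, hexp]
  field_simp

lemma differentiableAt_dMinus_comp {s K₀ : ℝ} {Sig : ℝ → ℝ} (hs : s ≠ 0) (hK₀ : K₀ ≠ 0)
    (hSig : DifferentiableAt ℝ Sig K₀) (ht : 0 < Sig K₀) :
    DifferentiableAt ℝ (fun K => dMinus s K (Sig K)) K₀ := by
  have hlog : DifferentiableAt ℝ (fun K => log (s / K)) K₀ :=
    ((differentiableAt_const s).div differentiableAt_id hK₀).log (div_ne_zero hs hK₀)
  exact (hlog.sub (hSig.div_const 2)).div (hSig.sqrt ht.ne') (sqrt_pos.mpr ht).ne'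

lemma hasDerivAt_putBS_comp {s K₀ Sig' : ℝ} {Sig : ℝ → ℝ} (hs : 0 < s) (hK₀ : 0 < K₀)
    (hSig : HasDerivAt Sig Sig' K₀) (ht : 0 < Sig K₀) :
    HasDerivAt (fun K => putBS K s (Sig K))
      (stdCDF (-dMinus s K₀ (Sig K₀)) +
        s * stdPhi (dPlus s K₀ (Sig K₀)) * (Sig' / (2 * √(Sig K₀)))) K₀ := by
  obtain ⟨a, hdm⟩ : ∃ a, HasDerivAt (fun K => dMinus s K (Sig K)) a K₀ :=
    ⟨_, (differentiableAt_dMinus_comp hs.ne' hK₀.ne' hSig.differentiableAt ht).hasDerivAt⟩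
  have hw : HasDerivAt (fun K => √(Sig K)) (Sig' / (2 * √(Sig K₀))) K₀ := hSig.sqrt ht.ne'
  have hdp : HasDerivAt (fun K => dPlus s K (Sig K)) (a + Sig' / (2 * √(Sig K₀))) K₀ :=
    (hdm.add hw).congr_of_eventuallyEq
      (.of_forall fun K => eq_add_of_sub_eq' (dPlus_sub_dMinus s K (Sig K)))
  have hput : HasDerivAt (fun K => putBS K s (Sig K)) _ K₀ :=
    ((hasDerivAt_id K₀).mul ((hasDerivAt_stdCDF _).comp K₀ hdm.neg)).sub
      (((hasDerivAt_stdCDF _).comp K₀ hdp.neg).const_mul s)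
  refine hput.congr_deriv ?_
  simp only [Pi.neg_apply, Function.comp_apply, id, stdPhi_neg, one_mul]
  linear_combination (-a) * mul_stdPhi_dMinus (K := K₀) hs hK₀ ht

theorem atm_skew_formula_general {Ω : Type*} [MeasurableSpace Ω]
    (P : Measure Ω) (X : Ω → ℝ)
    (s : ℝ) (hs : 0 < s) (Sig : ℝ → ℝ) (hSigPos : ∀ K, 0 < K → 0 < Sig K)
    (Sig' : ℝ) (hSigDiff : HasDerivAt Sig Sig' s)
    (hrel : ∀ᶠ K in nhds s, ∫ ω, max (K - X ω) 0 ∂P = putBS K s (Sig K))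
    (hput : HasDerivAt (fun K : ℝ => ∫ ω, max (K - X ω) 0 ∂P)
      ((P {ω | X ω < s}).toReal) s) :
    Sig' = 2 * Real.sqrt (Sig s) / (s * stdPhi (Real.sqrt (Sig s) / 2)) *
      ((P {ω | X ω < s}).toReal - stdCDF (Real.sqrt (Sig s) / 2)) := by
  have ht : 0 < Sig s := hSigPos s hs
  have hP := ((hasDerivAt_putBS_comp hs hs hSigDiff ht).congr_of_eventuallyEq hrel).unique hput
  rw [dMinus_self, dPlus_self, neg_neg] at hP
  have hr : 0 < √(Sig s) := sqrt_pos.mpr ht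
  have hφ : 0 < stdPhi (√(Sig s) / 2) := stdPhi_pos _
  rw [← hP]
  field_simp
  ring

/-- Static version of the at-the-money skew formula: if `Σ` is differentiable at `s` and the
implied-variance relation `E[(K - X)₊] = p_K(s, Σ(K))` holds near `s`, and the put expectation
is differentiable at `K = s` with derivative `P[X < s]`, then
`Σ'(s) = (2√Σ(s)/(s φ(√Σ(s)/2))) (P[X < s] - Φ(√Σ(s)/2))`. -/
theorem atm_skew_formula {Ω : Type*} [MeasurableSpace Ω]
    (P : Measure Ω) [IsProbabilityMeasure P] (X : Ω → ℝ)
    (hXpos : ∀ ω, 0 ≤ X ω) (hX : Integrable X P)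
    (s : ℝ) (hs : 0 < s) (Sig : ℝ → ℝ) (hSigPos : ∀ K, 0 < K → 0 < Sig K)
    (Sig' : ℝ) (hSigDiff : HasDerivAt Sig Sig' s)
    (hrel : ∀ᶠ K in nhds s, ∫ ω, max (K - X ω) 0 ∂P = putBS K s (Sig K))
    (hput : HasDerivAt (fun K : ℝ => ∫ ω, max (K - X ω) 0 ∂P)
      ((P {ω | X ω < s}).toReal) s) :
    Sig' = 2 * Real.sqrt (Sig s) / (s * stdPhi (Real.sqrt (Sig s) / 2)) *
      ((P {ω | X ω < s}).toReal - stdCDF (Real.sqrt (Sig s) / 2)) :=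
  atm_skew_formula_general P X s hs Sig hSigPos Sig' hSigDiff hrel hput
end

section
/- Let V > 0, a > 0, T > 0 and H ∈ (0, 1/2]. Then ((∫_0^T V ds) · (∫_0^T V·a·u^{H−1/2} du)) / (√V · ∫_0^T √V · (∫_s^T V·a·(u−s)^{H−1/2} du) ds) = H + 3/2. (Computation in the Remark after Theorem 4 of the paper: when the initial forward variance curve V₀(t) ≡ V is flat and k(t) = a·t^{H−1/2}, the right-hand side of Theorem 4 equals H + 3/2.) -/
/-!
For a flat curve the factors `V`, `√V` and `a` cancel, leaving, with `r = H - 1/2`,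
`T ∫₀ᵀ u^r du / ∫₀ᵀ ∫ₛᵀ (u - s)^r du ds`. The inner integral is `(T - s)^(r+1)/(r+1)`, so the
quotient is `(T^(r+2)/(r+1)) / (T^(r+2)/((r+1)(r+2))) = r + 2 = H + 3/2`.
-/

open MeasureTheory Real Set

theorem integral_Ioo_sub_rpow {r s t : ℝ} (hr : -1 < r) (hst : s ≤ t) :
    ∫ u in Ioo s t, (u - s) ^ r = (t - s) ^ (r + 1) / (r + 1) := by
  rw [← integral_Ioc_eq_integral_Ioo, ← intervalIntegral.integral_of_le hst,
    intervalIntegral.integral_comp_sub_right (fun x => x ^ r), sub_self,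
    integral_rpow (Or.inl hr), zero_rpow (by linarith), sub_zero]

theorem integral_Ioo_rpow_sub {r s t : ℝ} (hr : -1 < r) (hst : s ≤ t) :
    ∫ u in Ioo s t, (t - u) ^ r = (t - s) ^ (r + 1) / (r + 1) := by
  rw [← integral_Ioc_eq_integral_Ioo, ← intervalIntegral.integral_of_le hst,
    intervalIntegral.integral_comp_sub_left (fun x => x ^ r), sub_self,
    integral_rpow (Or.inl hr), zero_rpow (by linarith), sub_zero]

theorem integral_Ioo_integral_Ioo_sub_rpow {r T : ℝ} (hr : -1 < r) (hT : 0 ≤ T) :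
    ∫ s in Ioo 0 T, ∫ u in Ioo s T, (u - s) ^ r = T ^ (r + 2) / ((r + 1) * (r + 2)) := by
  calc ∫ s in Ioo 0 T, ∫ u in Ioo s T, (u - s) ^ r
      = ∫ s in Ioo 0 T, (r + 1)⁻¹ * (T - s) ^ (r + 1) :=
        setIntegral_congr_fun measurableSet_Ioo fun s hs => by
          rw [integral_Ioo_sub_rpow hr hs.2.le, div_eq_inv_mul]
    _ = T ^ (r + 2) / ((r + 1) * (r + 2)) := by
        rw [integral_const_mul, integral_Ioo_rpow_sub (by linarith) hT, sub_zero]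
        field_simp
        ring_nf

theorem mul_integral_rpow_div_iterated_integral_sub_rpow {r T : ℝ} (hr : -1 < r) (hT : 0 < T) :
    T * (∫ u in Ioo 0 T, u ^ r) / ∫ s in Ioo 0 T, ∫ u in Ioo s T, (u - s) ^ r = r + 2 := by
  have h1 : 0 < r + 1 := by linarith
  have h2 : 0 < r + 2 := by linarith
  have hpow : T ^ (r + 2) = T * T ^ (r + 1) := by
    rw [← rpow_one_add' hT.le (by positivity)]; ring_nf
  have h0 : ∫ u in Ioo 0 T, u ^ r = T ^ (r + 1) / (r + 1) := by
    simpa using integral_Ioo_sub_rpow (s := 0) hr hT.le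
  rw [h0, integral_Ioo_integral_Ioo_sub_rpow hr hT.le, hpow]
  field_simp

theorem flat_curve_ssr_limit_general (V a T H : ℝ) (hV : 0 < V) (ha : 0 < a) (hT : 0 < T)
    (hH0 : 0 < H) :
    ((∫ _s in Set.Ioo (0:ℝ) T, V) *
        (∫ u in Set.Ioo (0:ℝ) T, V * a * u ^ (H - 1 / 2))) /
      (Real.sqrt V *
        ∫ s in Set.Ioo (0:ℝ) T,
          Real.sqrt V * ∫ u in Set.Ioo s T, V * a * (u - s) ^ (H - 1 / 2))
      = H + 3 / 2 := by
  have hc : V * (V * a) ≠ 0 := by positivity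
  simp only [integral_const_mul, setIntegral_const, volume_real_Ioo_of_le hT.le, sub_zero,
    smul_eq_mul]
  calc T * V * (V * a * ∫ u in Ioo 0 T, u ^ (H - 1 / 2)) /
        (√V * (√V * (V * a * ∫ s in Ioo 0 T, ∫ u in Ioo s T, (u - s) ^ (H - 1 / 2))))
      = V * (V * a) * (T * ∫ u in Ioo 0 T, u ^ (H - 1 / 2)) /
        (V * (V * a) * ∫ s in Ioo 0 T, ∫ u in Ioo s T, (u - s) ^ (H - 1 / 2)) := by
        rw [← mul_assoc √V, mul_self_sqrt hV.le]; ring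
    _ = H - 1 / 2 + 2 := by
        rw [mul_div_mul_left _ _ hc,
          mul_integral_rpow_div_iterated_integral_sub_rpow (by linarith) hT]
    _ = H + 3 / 2 := by ring

/-- Computation in the Remark after Theorem 4: when the initial forward variance curve is flat
(`V₀(t) ≡ V`) and `k(t) = a t^{H-1/2}`, the small vol-of-vol limit of the SSR equals
`H + 3/2`. -/
theorem flat_curve_ssr_limit (V a T H : ℝ) (hV : 0 < V) (ha : 0 < a) (hT : 0 < T)
    (hH0 : 0 < H) (hH : H ≤ 1 / 2) :
    ((∫ _s in Set.Ioo (0:ℝ) T, V) *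
        (∫ u in Set.Ioo (0:ℝ) T, V * a * u ^ (H - 1 / 2))) /
      (Real.sqrt V *
        ∫ s in Set.Ioo (0:ℝ) T,
          Real.sqrt V * ∫ u in Set.Ioo s T, V * a * (u - s) ^ (H - 1 / 2))
      = H + 3 / 2 :=
  flat_curve_ssr_limit_general V a T H hV ha hT hH0
end
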